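/- Robust equivalence for the cost constraint: let Ω be a nonempty finite set, m a supermodular capacity on Ω with dual m'(A) = 1 − m(Ω \ A), f : Ω → ℝ, and 𝒬 a set of probability vectors on Ω such that core(m) ⊆ 𝒬 and there exists q* ∈ core(m) with E_{q*}[f] ≥ E_q[f] for every q ∈ 𝒬 (i.e., a maximizer of E_q[f] over 𝒬 lies in core(m)). Then the discrete Choquet integral with respect to the dual satisfies (C)∫ f dm' = sup_{q∈𝒬} E_q[f], and this supremum is attained. -/

import Mathlib

open Finset Filter

/-- A capacity on a finite type `Ω`: a normalized monotone set function. -/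
def IsCapacity {Ω : Type*} [Fintype Ω] (m : Finset Ω → ℝ) : Prop :=
  m ∅ = 0 ∧ m Finset.univ = 1 ∧ ∀ ⦃A B : Finset Ω⦄, A ⊆ B → m A ≤ m B

/-- The initial segment `{σ 0, …, σ (k-1)}` of an enumeration `σ` of `Ω`. -/
def prefSet {Ω : Type*} [Fintype Ω] [DecidableEq Ω]
    (σ : Fin (Fintype.card Ω) ≃ Ω) (k : ℕ) : Finset Ω :=
  (Finset.univ.filter fun j : Fin (Fintype.card Ω) => (j : ℕ) < k).image σ

/-- The Choquet sum of `f` against `m` along an enumeration `σ` of `Ω`. -/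
def choquetSum {Ω : Type*} [Fintype Ω] [DecidableEq Ω]
    (m : Finset Ω → ℝ) (f : Ω → ℝ) (σ : Fin (Fintype.card Ω) ≃ Ω) : ℝ :=
  ∑ i : Fin (Fintype.card Ω),
    f (σ i) * (m (prefSet σ ((i : ℕ) + 1)) - m (prefSet σ (i : ℕ)))

/-- An enumeration of `Ω` along which `f` is weakly decreasing. -/
noncomputable def sortedEquiv {Ω : Type*} [Fintype Ω] (f : Ω → ℝ) :
    Fin (Fintype.card Ω) ≃ Ω :=
  (Tuple.sort fun i => -f ((Fintype.equivFin Ω).symm i)).trans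
    (Fintype.equivFin Ω).symm

/-- The discrete Choquet integral of `f` with respect to `m`. -/
noncomputable def choquet {Ω : Type*} [Fintype Ω] [DecidableEq Ω]
    (m : Finset Ω → ℝ) (f : Ω → ℝ) : ℝ :=
  choquetSum m f (sortedEquiv f)

/-- The dual capacity `m'(A) = 1 - m(Ω \ A)`. -/
def dualCap {Ω : Type*} [Fintype Ω] [DecidableEq Ω]
    (m : Finset Ω → ℝ) (A : Finset Ω) : ℝ :=
  1 - m Aᶜ

/-- Supermodularity: `m(A ∪ B) + m(A ∩ B) ≥ m(A) + m(B)`. -/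
def IsSupermodular {Ω : Type*} [DecidableEq Ω] (m : Finset Ω → ℝ) : Prop :=
  ∀ A B : Finset Ω, m A + m B ≤ m (A ∪ B) + m (A ∩ B)

/-- Submodularity: `m(A ∪ B) + m(A ∩ B) ≤ m(A) + m(B)`. -/
def IsSubmodular {Ω : Type*} [DecidableEq Ω] (m : Finset Ω → ℝ) : Prop :=
  ∀ A B : Finset Ω, m (A ∪ B) + m (A ∩ B) ≤ m A + m B

/-- A probability vector on a finite type `Ω`. -/
def IsProbVector {Ω : Type*} [Fintype Ω] (P : Ω → ℝ) : Prop :=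
  (∀ ω, 0 ≤ P ω) ∧ ∑ ω, P ω = 1

/-- Membership in the core of a capacity `m`. -/
def memCore {Ω : Type*} [Fintype Ω] (m : Finset Ω → ℝ) (P : Ω → ℝ) : Prop :=
  IsProbVector P ∧ ∀ A : Finset Ω, m A ≤ ∑ ω ∈ A, P ω

/-- The λ-rule set function `m_λ(A) = (∏_{ω ∈ A} (1 + λ g(ω)) - 1) / λ`. -/
noncomputable def mLam {Ω : Type*} (lam : ℝ) (g : Ω → ℝ) (A : Finset Ω) : ℝ :=
  ((∏ ω ∈ A, (1 + lam * g ω)) - 1) / lam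

/-!
Let `σ` enumerate `Ω` so that `f` decreases along it, and put `S_k = {σ 0, …, σ (k-1)}`. The
marginal vector `P (σ k) = m'(S_{k+1}) - m'(S_k)` of the dual capacity satisfies
`E_P[f] = (C)∫ f dm'` by reindexing, and it lies in `core(m)` because `m'` is submodular
(the greedy argument of Edmonds and Shapley). Conversely, every `q ∈ core(m)` satisfies
`q(S_k) ≤ m'(S_k) = P(S_k)`, with equality at `S_n = Ω`; so `P` stochastically dominates `q`
along the decreasing order of `f`, and Abel summation gives `E_q[f] ≤ E_P[f]`. Hence
`E_q[f] ≤ E_{q*}[f] ≤ (C)∫ f dm'` for every `q ∈ 𝒬`, with equality at `P ∈ core(m) ⊆ 𝒬`.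
-/

section PrefSet

variable {Ω : Type*} [Fintype Ω] [DecidableEq Ω] (σ : Fin (Fintype.card Ω) ≃ Ω)

lemma mem_prefSet {k : ℕ} {ω : Ω} : ω ∈ prefSet σ k ↔ (σ.symm ω : ℕ) < k := by
  simp only [prefSet, mem_image, mem_filter, mem_univ, true_and]
  exact ⟨by rintro ⟨j, hj, rfl⟩; simpa using hj, fun h => ⟨σ.symm ω, h, σ.apply_symm_apply ω⟩⟩

@[simp] lemma prefSet_zero : prefSet σ 0 = ∅ := by
  ext ω; simp [mem_prefSet]

@[simp] lemma prefSet_card : prefSet σ (Fintype.card Ω) = univ := by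
  ext ω; simp [mem_prefSet]

lemma prefSet_mono {k l : ℕ} (h : k ≤ l) : prefSet σ k ⊆ prefSet σ l := fun ω hω => by
  rw [mem_prefSet] at *; omega

lemma apply_notMem_prefSet {k : ℕ} (h : k < Fintype.card Ω) : σ ⟨k, h⟩ ∉ prefSet σ k := by
  simp [mem_prefSet]

lemma prefSet_succ {k : ℕ} (h : k < Fintype.card Ω) :
    prefSet σ (k + 1) = insert (σ ⟨k, h⟩) (prefSet σ k) := by
  ext ω
  simp only [mem_insert, mem_prefSet, ← σ.symm_apply_eq, Fin.ext_iff]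
  omega

end PrefSet

lemma IsSubmodular.sub_le_sub_of_subset {Ω : Type*} [DecidableEq Ω] {ν : Finset Ω → ℝ}
    (hν : IsSubmodular ν) {S T : Finset Ω} {x : Ω} (hST : S ⊆ T) (hx : x ∉ T) :
    ν (insert x T) - ν T ≤ ν (insert x S) - ν S := by
  have h := hν T (insert x S)
  rw [union_insert, union_eq_left.2 hST, inter_insert_of_notMem hx, inter_eq_right.2 hST] at h
  linarith

section MarginalVector

variable {Ω : Type*} [Fintype Ω] [DecidableEq Ω] (σ : Fin (Fintype.card Ω) ≃ Ω)

def marginalVector (ν : Finset Ω → ℝ) (ω : Ω) : ℝ :=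
  ν (prefSet σ ((σ.symm ω : ℕ) + 1)) - ν (prefSet σ (σ.symm ω))

lemma marginalVector_apply (ν : Finset Ω → ℝ) {k : ℕ} (h : k < Fintype.card Ω) :
    marginalVector σ ν (σ ⟨k, h⟩) = ν (prefSet σ (k + 1)) - ν (prefSet σ k) := by
  simp [marginalVector]

lemma choquetSum_eq_sum_marginalVector_mul (ν : Finset Ω → ℝ) (f : Ω → ℝ) :
    choquetSum ν f σ = ∑ ω, marginalVector σ ν ω * f ω := by
  rw [choquetSum, ← σ.sum_comp]
  simp [marginalVector, mul_comm]

lemma sum_marginalVector_prefSet (ν : Finset Ω → ℝ) {k : ℕ} (hk : k ≤ Fintype.card Ω) :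
    ∑ ω ∈ prefSet σ k, marginalVector σ ν ω = ν (prefSet σ k) - ν ∅ := by
  induction k with
  | zero => simp
  | succ k ih =>
    have hk' : k < Fintype.card Ω := hk
    rw [prefSet_succ σ hk', sum_insert (apply_notMem_prefSet σ hk'), ih hk'.le,
      marginalVector_apply, prefSet_succ σ hk']
    ring

lemma IsSubmodular.sum_marginalVector_le {ν : Finset Ω → ℝ} (hν : IsSubmodular ν)
    (A : Finset Ω) : ∑ ω ∈ A, marginalVector σ ν ω ≤ ν A - ν ∅ := by
  suffices ∀ k ≤ Fintype.card Ω,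
      ∑ ω ∈ prefSet σ k ∩ A, marginalVector σ ν ω ≤ ν (prefSet σ k ∩ A) - ν ∅ by
    simpa using this _ le_rfl
  intro k hk
  induction k with
  | zero => simp
  | succ k ih =>
    have hk' : k < Fintype.card Ω := hk
    have hx := apply_notMem_prefSet σ hk'
    rw [prefSet_succ σ hk']
    by_cases hxA : σ ⟨k, hk'⟩ ∈ A
    · rw [insert_inter_of_mem hxA, sum_insert (fun h => hx (mem_of_mem_inter_left h)),
        marginalVector_apply, prefSet_succ σ hk']
      have := hν.sub_le_sub_of_subset (inter_subset_left (s₂ := A)) hx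
      linarith [ih hk'.le]
    · rw [insert_inter_of_notMem hxA]
      exact ih hk'.le

end MarginalVector

section Core

variable {Ω : Type*} [Fintype Ω] [DecidableEq Ω] {m : Finset Ω → ℝ}

lemma IsCapacity.dual (hm : IsCapacity m) : IsCapacity (dualCap m) := by
  obtain ⟨h0, h1, hmono⟩ := hm
  refine ⟨by simp [dualCap, h1], by simp [dualCap, h0], fun A B hAB => ?_⟩
  simp only [dualCap]
  linarith [hmono (compl_subset_compl.2 hAB)]

lemma IsSupermodular.isSubmodular_dualCap (hm : IsSupermodular m) :
    IsSubmodular (dualCap m) := by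
  intro A B
  have := hm Aᶜ Bᶜ
  rw [← compl_inter, ← compl_union] at this
  simp only [dualCap]
  linarith

lemma memCore_iff_sum_le_dualCap {P : Ω → ℝ} (hP : IsProbVector P) :
    memCore m P ↔ ∀ A, ∑ ω ∈ A, P ω ≤ dualCap m A := by
  have hsplit (A : Finset Ω) : ∑ ω ∈ A, P ω + ∑ ω ∈ Aᶜ, P ω = 1 :=
    (sum_add_sum_compl A P).trans hP.2
  refine ⟨fun h A => ?_, fun h => ⟨hP, fun A => ?_⟩⟩
  · have := h.2 Aᶜ
    linarith [hsplit A, show dualCap m A = 1 - m Aᶜ from rfl]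
  · have := h Aᶜ
    rw [dualCap, compl_compl] at this
    linarith [hsplit A]

theorem memCore_marginalVector (σ : Fin (Fintype.card Ω) ≃ Ω) (hm : IsCapacity m)
    (hsm : IsSupermodular m) : memCore m (marginalVector σ (dualCap m)) := by
  obtain ⟨h0, h1, hmono⟩ := hm.dual
  have hprob : IsProbVector (marginalVector σ (dualCap m)) := by
    refine ⟨fun ω => sub_nonneg.2 (hmono (prefSet_mono σ (Nat.le_succ _))), ?_⟩
    simpa [h0, h1] using sum_marginalVector_prefSet σ (dualCap m) le_rfl
  rw [memCore_iff_sum_le_dualCap hprob]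
  intro A
  simpa [h0] using hsm.isSubmodular_dualCap.sum_marginalVector_le σ A

end Core

section Dominance

variable {Ω : Type*} [Fintype Ω] [DecidableEq Ω] {σ : Fin (Fintype.card Ω) ≃ Ω} {f : Ω → ℝ}

lemma sum_mul_nonneg_of_sum_prefSet_nonneg (hf : Antitone (f ∘ σ)) {d : Ω → ℝ}
    (hd : ∀ k ≤ Fintype.card Ω, 0 ≤ ∑ ω ∈ prefSet σ k, d ω) (htot : ∑ ω, d ω = 0) :
    0 ≤ ∑ ω, d ω * f ω := by
  have key : ∀ k ≤ Fintype.card Ω, ∀ t, (∀ ω ∈ prefSet σ k, t ≤ f ω) →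
      t * ∑ ω ∈ prefSet σ k, d ω ≤ ∑ ω ∈ prefSet σ k, d ω * f ω := by
    intro k hk
    induction k with
    | zero => simp
    | succ k ih =>
      intro t ht
      have hk' : k < Fintype.card Ω := hk
      set x := σ ⟨k, hk'⟩
      have hfx : ∀ ω ∈ prefSet σ k, f x ≤ f ω := fun ω hω => by
        simpa using hf (Fin.le_iff_val_le_val.2 ((mem_prefSet σ).1 hω).le : σ.symm ω ≤ ⟨k, hk'⟩)
      have hD := hd (k + 1) hk
      rw [prefSet_succ σ hk'] at ht hD ⊢
      rw [sum_insert (apply_notMem_prefSet σ hk')] at hD ⊢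
      rw [sum_insert (apply_notMem_prefSet σ hk')]
      calc t * (d x + ∑ ω ∈ prefSet σ k, d ω)
          ≤ f x * (d x + ∑ ω ∈ prefSet σ k, d ω) :=
            mul_le_mul_of_nonneg_right (ht x (mem_insert_self _ _)) hD
        _ ≤ d x * f x + ∑ ω ∈ prefSet σ k, d ω * f ω := by
            linarith [ih hk'.le (f x) hfx]
  obtain ⟨t, ht⟩ := (Set.finite_range f).bddBelow
  simpa [htot] using key _ le_rfl t fun ω _ => ht ⟨ω, rfl⟩

lemma sum_mul_le_sum_mul_of_sum_prefSet_le (hf : Antitone (f ∘ σ)) {p q : Ω → ℝ}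
    (hpq : ∀ k ≤ Fintype.card Ω, ∑ ω ∈ prefSet σ k, q ω ≤ ∑ ω ∈ prefSet σ k, p ω)
    (htot : ∑ ω, q ω = ∑ ω, p ω) : ∑ ω, q ω * f ω ≤ ∑ ω, p ω * f ω := by
  have := sum_mul_nonneg_of_sum_prefSet_nonneg hf (d := p - q)
    (fun k hk => by simpa [sum_sub_distrib] using hpq k hk) (by simp [sum_sub_distrib, htot])
  simpa [sub_mul, sum_sub_distrib] using this

end Dominance

lemma antitone_comp_sortedEquiv {Ω : Type*} [Fintype Ω] (f : Ω → ℝ) :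
    Antitone (f ∘ sortedEquiv f) := by
  intro i j hij
  simpa [sortedEquiv] using (Tuple.monotone_sort fun i => -f ((Fintype.equivFin Ω).symm i)) hij

theorem sum_mul_le_choquet_dualCap_of_memCore {Ω : Type*} [Fintype Ω] [DecidableEq Ω]
    {m : Finset Ω → ℝ} (hm : IsCapacity m) (f : Ω → ℝ) {q : Ω → ℝ} (hq : memCore m q) :
    ∑ ω, q ω * f ω ≤ choquet (dualCap m) f := by
  obtain ⟨h0, h1, -⟩ := hm.dual
  rw [choquet, choquetSum_eq_sum_marginalVector_mul]
  refine sum_mul_le_sum_mul_of_sum_prefSet_le (antitone_comp_sortedEquiv f) (fun k hk => ?_) ?_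
  · rw [sum_marginalVector_prefSet _ _ hk, h0, sub_zero]
    exact (memCore_iff_sum_le_dualCap hq.1).1 hq _
  · simpa [h0, h1, hq.1.2] using
      (sum_marginalVector_prefSet (sortedEquiv f) (dualCap m) le_rfl).symm

theorem choquet_dual_eq_sup_ambiguity_general {Ω : Type*} [Fintype Ω] [DecidableEq Ω]
    (m : Finset Ω → ℝ) (hm : IsCapacity m) (hsm : IsSupermodular m) (f : Ω → ℝ)
    (Q : Set (Ω → ℝ))
    (hcore : ∀ P : Ω → ℝ, memCore m P → P ∈ Q)
    (hmax : ∃ qstar : Ω → ℝ, memCore m qstar ∧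
      ∀ q ∈ Q, ∑ ω, q ω * f ω ≤ ∑ ω, qstar ω * f ω) :
    IsGreatest ((fun q : Ω → ℝ => ∑ ω, q ω * f ω) '' Q) (choquet (dualCap m) f) := by
  obtain ⟨qstar, hqstar, hqstar_max⟩ := hmax
  refine ⟨⟨_, hcore _ (memCore_marginalVector (sortedEquiv f) hm hsm), ?_⟩, ?_⟩
  · exact (choquetSum_eq_sum_marginalVector_mul _ _ _).symm
  · rintro _ ⟨q, hq, rfl⟩
    exact (hqstar_max q hq).trans (sum_mul_le_choquet_dualCap_of_memCore hm f hqstar)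

/-- robust equivalence for the cost constraint: the dual Choquet integral
equals the attained supremum of expectations over an ambiguity set containing the core,
provided a maximizer lies in the core. -/
theorem choquet_dual_eq_sup_ambiguity {Ω : Type*} [Fintype Ω] [DecidableEq Ω] [Nonempty Ω]
    (m : Finset Ω → ℝ) (hm : IsCapacity m) (hsm : IsSupermodular m) (f : Ω → ℝ)
    (Q : Set (Ω → ℝ)) (hQ : ∀ q ∈ Q, IsProbVector q)
    (hcore : ∀ P : Ω → ℝ, memCore m P → P ∈ Q)
    (hmax : ∃ qstar : Ω → ℝ, memCore m qstar ∧
      ∀ q ∈ Q, ∑ ω, q ω * f ω ≤ ∑ ω, qstar ω * f ω) :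
    IsGreatest ((fun q : Ω → ℝ => ∑ ω, q ω * f ω) '' Q) (choquet (dualCap m) f) :=
  choquet_dual_eq_sup_ambiguity_general m hm hsm f Q hcore hmax
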